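/- An odd composite number N coprime to b and to |b|_N is a Midy pseudoprime to base b if and only if |b|_N = |b|_p for every prime p dividing N. -/
import Mathlib

/-- The multiplicative order of `b` modulo `N`. -/
noncomputable def ord (b N : ℕ) : ℕ := orderOf (b : ZMod N)

/-- `N` has the Midy property for base `b` and `d` (where `|b|_N = k·d`):
`ν_p(N) ≤ ν_p(d)` for all primes `p` dividing `gcd(b^k − 1, N)`. -/
def HasMidy (b N d : ℕ) : Prop :=
  ∀ p : ℕ, p.Prime → p ∣ Nat.gcd (b ^ (ord b N / d) - 1) N →
    padicValNat p N ≤ padicValNat p d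

/-- `N` is a Midy pseudoprime to base `b`: `N` is odd composite, coprime to `b`
and to `|b|_N`, and has the Midy property for `b` and every divisor `d > 1` of `|b|_N`. -/
def MidyPsp (b N : ℕ) : Prop :=
  Odd N ∧ 1 < N ∧ ¬ N.Prime ∧ Nat.Coprime N b ∧ Nat.Coprime N (ord b N) ∧
    ∀ d : ℕ, 1 < d → d ∣ ord b N → HasMidy b N d

private lemma pow_cast_eq_one_iff {b k p : ℕ} (hb : 0 < b) :
    (b : ZMod p) ^ k = 1 ↔ p ∣ b ^ k - 1 := by
  have h1 : 1 ≤ b ^ k := Nat.one_le_pow _ _ hb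
  rw [← Nat.cast_pow, show (1 : ZMod p) = ((1 : ℕ) : ZMod p) by simp,
    ZMod.natCast_eq_natCast_iff]
  constructor
  · intro h
    exact (Nat.modEq_iff_dvd' h1).mp h.symm
  · intro h
    exact ((Nat.modEq_iff_dvd' h1).mpr h).symm

private lemma ord_dvd_ord_of_dvd {b p N : ℕ} (h : p ∣ N) : ord b p ∣ ord b N := by
  rw [ord, orderOf_dvd_iff_pow_eq_one]
  have h1 : ((b : ZMod N) ^ (ord b N)) = 1 := pow_orderOf_eq_one _
  have h2 : (ZMod.castHom h (ZMod p)) ((b : ZMod N) ^ ord b N) = 1 := by rw [h1]; exact map_one _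
  rw [map_pow, map_natCast] at h2
  exact h2

private lemma ord_pos {b N : ℕ} (hN : 1 < N) (hco : Nat.Coprime b N) : 0 < ord b N := by
  haveI : NeZero N := ⟨by omega⟩
  rw [ord, orderOf_pos_iff, isOfFinOrder_iff_pow_eq_one]
  refine ⟨N.totient, Nat.totient_pos.mpr (by omega), ?_⟩
  have h := Nat.ModEq.pow_totient hco
  have := (ZMod.natCast_eq_natCast_iff _ _ _).mpr h
  simpa using this

theorem stmt8 (b N : ℕ) (hb : 1 < b) (hodd : Odd N) (hN : 1 < N)
    (hcomp : ¬ N.Prime) (hco : Nat.Coprime N b) (hco' : Nat.Coprime N (ord b N)) :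
    MidyPsp b N ↔ ∀ p : ℕ, p.Prime → p ∣ N → ord b N = ord b p := by
  have hb0 : 0 < b := by omega
  have hepos : 0 < ord b N := ord_pos hN hco.symm
  constructor
  · rintro ⟨-, -, -, -, -, hmidy⟩ p hp hpN
    have hdvd : ord b p ∣ ord b N := ord_dvd_ord_of_dvd hpN
    by_contra hne
    have hppos : 0 < ord b p := ord_pos hp.one_lt (Nat.Coprime.coprime_dvd_left hpN hco).symm
    have hlt : ord b p < ord b N := lt_of_le_of_ne (Nat.le_of_dvd hepos hdvd) (fun h => hne h.symm)
    set d := ord b N / ord b p with hd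
    have hd1 : 1 < d := by
      rcases hdvd with ⟨c, hc⟩
      rw [hd, hc, Nat.mul_div_cancel_left _ hppos]
      nlinarith
    have hddvd : d ∣ ord b N := Nat.div_dvd_of_dvd hdvd
    have hk : ord b N / d = ord b p := Nat.div_div_self hdvd hepos.ne'
    have hpdvd : p ∣ b ^ (ord b N / d) - 1 := by
      rw [hk, ← pow_cast_eq_one_iff hb0]
      exact pow_orderOf_eq_one _
    haveI : Fact p.Prime := ⟨hp⟩
    have hle := hmidy d hd1 hddvd p hp (Nat.dvd_gcd hpdvd hpN)
    have h1 : 1 ≤ padicValNat p N := one_le_padicValNat_of_dvd (by omega) hpN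
    have hpd : p ∣ d := dvd_of_one_le_padicValNat (le_trans h1 hle)
    have : p ∣ Nat.gcd N (ord b N) := Nat.dvd_gcd hpN (hpd.trans hddvd)
    rw [hco'] at this
    exact hp.one_lt.ne' (Nat.dvd_one.mp this)
  · intro h
    refine ⟨hodd, hN, hcomp, hco, hco', ?_⟩
    intro d hd1 hddvd p hp hpgcd
    exfalso
    have hpN : p ∣ N := hpgcd.trans (Nat.gcd_dvd_right _ _)
    have hpb : p ∣ b ^ (ord b N / d) - 1 := hpgcd.trans (Nat.gcd_dvd_left _ _)
    have : (b : ZMod p) ^ (ord b N / d) = 1 := (pow_cast_eq_one_iff hb0).mpr hpb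
    have hdvd : ord b p ∣ ord b N / d := orderOf_dvd_iff_pow_eq_one.mpr this
    rw [← h p hp hpN] at hdvd
    have hkpos : 0 < ord b N / d := Nat.div_pos (Nat.le_of_dvd hepos hddvd) (by omega)
    have := Nat.le_of_dvd hkpos hdvd
    have := Nat.div_lt_self hepos hd1
    omega
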